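/- In the ring MvPowerSeries ℕ+ ℤ, let S be the power series whose coefficient at each m : ℕ+ →₀ ℕ is the hyper-Catalan number C_m. Then for every m ≠ 0, the coefficient of S at m equals Σ_{n ≥ 1} (coefficient at m of X_n · S^n), where X_n denotes the monomial variable indexed by n; only finitely many terms of this sum are nonzero (namely those n with m(n) ≥ 1). Moreover the coefficient of S at 0 is 1. -/

import Mathlib

/-!
Lagrange inversion predicts that the coefficient of `S ^ (j + 1)` at `m` is
`(j + 1) (E + j)! / ((V + j + 1)! ∏ mₙ!)`, where `E = Σ n mₙ` and `V = Σ (n - 1) mₙ`;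
at `j = 0` this is `C_m`. These rational numbers satisfy the recursions that
`S = 1 + Σ Xₙ Sⁿ` and `S ^ (j + 2) = S · S ^ (j + 1)` impose on coefficients; both come down
to `E = V + Σ mₙ`.
A well-founded induction on `m` then shows simultaneously that every power of `S` has these
coefficients and that `S` satisfies the functional equation below `m`. The natural-number division
in `C_m` is exact because the recursion writes `E! / ((V + 1)! ∏ mₙ!)` as a sum of integer
coefficients of powers of `S` at smaller indices.
-/

/-- The hyper-Catalan number
`C_m = (Σ n·m n)! / ((1 + Σ (n−1)·m n)! · Π (m n)!)`. -/
def hyperCatalan (m : ℕ+ →₀ ℕ) : ℕ :=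
  (m.sum fun n k => (n : ℕ) * k).factorial /
    ((1 + m.sum fun n k => ((n : ℕ) - 1) * k).factorial * m.prod fun _ k => k.factorial)

open Finsupp MvPowerSeries

namespace MvPowerSeries

variable {σ R : Type*} [CommSemiring R]

theorem coeff_X_mul_of_apply_eq_zero {m : σ →₀ ℕ} {n : σ} (h : m n = 0)
    (φ : MvPowerSeries σ R) : coeff m (X n * φ) = 0 := by
  rw [X, coeff_monomial_mul, if_neg (by simpa [single_le_iff] using h)]

theorem coeff_X_mul_of_apply_ne_zero {m : σ →₀ ℕ} {n : σ} (h : m n ≠ 0)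
    (φ : MvPowerSeries σ R) : coeff m (X n * φ) = coeff (m - single n 1) φ := by
  rw [X, coeff_monomial_mul, if_pos (single_le_iff.2 (Nat.one_le_iff_ne_zero.2 h)), one_mul]

theorem coeff_mul_congr_left {m : σ →₀ ℕ} {φ ψ : MvPowerSeries σ R}
    (h : ∀ a ≤ m, coeff a φ = coeff a ψ) (χ : MvPowerSeries σ R) :
    coeff m (φ * χ) = coeff m (ψ * χ) := by
  classical
  simp only [coeff_mul]
  refine Finset.sum_congr rfl fun p hp => ?_
  rw [h p.1 (by rw [← Finset.HasAntidiagonal.mem_antidiagonal.1 hp]; exact le_self_add)]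

theorem coeff_mul_of_coeff_eq_sum_coeff_X_mul {m : σ →₀ ℕ} {φ : MvPowerSeries σ R}
    {ψ : σ → MvPowerSeries σ R} (h₀ : coeff 0 φ = 1)
    (h : ∀ a ≤ m, a ≠ 0 → coeff a φ = ∑ n ∈ a.support, coeff a (X n * ψ n))
    (χ : MvPowerSeries σ R) :
    coeff m (φ * χ) = coeff m χ + ∑ n ∈ m.support, coeff m (X n * ψ n * χ) := by
  classical
  -- below `m`, the infinite sum `Σₙ Xₙ ψₙ` agrees with its part over `m.support`
  have hφ : ∀ a ≤ m, coeff a φ = coeff a (1 + ∑ n ∈ m.support, X n * ψ n) := by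
    intro a ha
    rw [map_add, map_sum]
    by_cases ha₀ : a = 0
    · subst ha₀
      simp [h₀, coeff_zero_X_mul]
    · rw [h a ha ha₀, coeff_one, if_neg ha₀, zero_add]
      exact Finset.sum_subset (support_mono ha) fun n _ hn =>
        coeff_X_mul_of_apply_eq_zero (notMem_support_iff.1 hn) _
  rw [coeff_mul_congr_left hφ, add_mul, one_mul, Finset.sum_mul, map_add, map_sum]

theorem support_coeff_X_mul_subset (m : σ →₀ ℕ) (f : σ → MvPowerSeries σ R) :
    (Function.support fun n => coeff m (X n * f n)) ⊆ m.support := fun n hn => by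
  by_contra h
  exact hn (coeff_X_mul_of_apply_eq_zero (notMem_support_iff.1 h) _)

end MvPowerSeries

theorem Finsupp.sub_single_one_lt {ι : Type*} {u : ι →₀ ℕ} {i : ι} (h : u i ≠ 0) :
    u - single i 1 < u := by
  conv_rhs => rw [← sub_add_single_one_cancel h]
  exact lt_add_of_pos_right _ (pos_iff_ne_zero.2 (single_ne_zero.2 one_ne_zero))

open scoped Nat

namespace HyperCatalan

noncomputable def E (m : ℕ+ →₀ ℕ) : ℕ := weight (fun n : ℕ+ => (n : ℕ)) m

noncomputable def V (m : ℕ+ →₀ ℕ) : ℕ := weight (fun n : ℕ+ => (n : ℕ) - 1) m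

def P (m : ℕ+ →₀ ℕ) : ℕ := m.prod fun _ k => k !

theorem P_pos (m : ℕ+ →₀ ℕ) : 0 < P m :=
  Finset.prod_pos fun _ _ => Nat.factorial_pos _

theorem hyperCatalan_eq (m : ℕ+ →₀ ℕ) : hyperCatalan m = (E m)! / ((1 + V m)! * P m) := by
  simp only [hyperCatalan, E, V, P, weight_apply, smul_eq_mul, mul_comm]

theorem E_eq_V_add_degree (m : ℕ+ →₀ ℕ) : E m = V m + degree m := by
  simp only [E, V, weight_apply, degree_apply, Finsupp.sum, smul_eq_mul, ← Finset.sum_add_distrib]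
  refine Finset.sum_congr rfl fun n _ => ?_
  rw [← mul_add_one]
  exact congrArg (m n * ·) (PNat.natPred_add_one n).symm

theorem E_sub_single_add {m : ℕ+ →₀ ℕ} {n : ℕ+} (h : m n ≠ 0) :
    E (m - single n 1) + n = E m := by
  conv_rhs => rw [← sub_add_single_one_cancel h]
  simp [E, weight_single]

theorem V_sub_single_add {m : ℕ+ →₀ ℕ} {n : ℕ+} (h : m n ≠ 0) :
    V (m - single n 1) + (n - 1) = V m := by
  conv_rhs => rw [← sub_add_single_one_cancel h]
  simp [V, weight_single]

theorem P_eq_mul_P_sub_single {m : ℕ+ →₀ ℕ} {n : ℕ+} (h : m n ≠ 0) :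
    P m = m n * P (m - single n 1) := by
  have hm := mul_prod_erase' m n (fun _ k => k !) (fun _ => rfl)
  have hu := mul_prod_erase' (m - single n 1) n (fun _ k => k !) (fun _ => rfl)
  have herase : (m - single n 1).erase n = m.erase n := by
    ext k; by_cases hk : k = n <;> simp [hk, erase_ne]
  rw [P, P, ← hm, ← hu, herase, tsub_apply, single_eq_same, ← mul_assoc,
    ← Nat.mul_factorial_pred h]

theorem le_E {m : ℕ+ →₀ ℕ} {n : ℕ+} (h : m n ≠ 0) : (n : ℕ) ≤ E m :=
  E_sub_single_add h ▸ Nat.le_add_left _ _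

/-- The coefficient of `S ^ (j + 1)` at `m`, as predicted by Lagrange inversion. -/
noncomputable def powCoeff (j : ℕ) (m : ℕ+ →₀ ℕ) : ℚ :=
  (j + 1) * (E m + j)! / ((V m + j + 1)! * P m)

theorem powCoeff_zero (m : ℕ+ →₀ ℕ) : powCoeff 0 m = (E m)! / ((V m + 1)! * P m) := by
  simp [powCoeff]

theorem powCoeff_zero_right (j : ℕ) : powCoeff j 0 = 1 := by
  have : ((j + 1 : ℕ)! : ℚ) ≠ 0 := by positivity
  simp only [powCoeff, E, V, P, map_zero, prod_zero_index, zero_add, Nat.factorial_succ]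
  push_cast
  field_simp

theorem powCoeff_sub_single (i : ℕ) {m : ℕ+ →₀ ℕ} {n : ℕ+} (h : m n ≠ 0) :
    powCoeff (i + n.natPred) (m - single n 1)
      = (i + n) * m n * (E m + i - 1)! / ((V m + i + 1)! * P m) := by
  have hE := E_sub_single_add h
  have hV := V_sub_single_add h
  have hn := PNat.natPred_add_one n
  have hm : (m n : ℚ) ≠ 0 := by exact_mod_cast h
  have hP : (P (m - single n 1) : ℚ) ≠ 0 := by have := P_pos (m - single n 1); positivity
  rw [powCoeff, P_eq_mul_P_sub_single h, show E (m - single n 1) + (i + n.natPred) = E m + i - 1 by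
    omega, show V (m - single n 1) + (i + n.natPred) + 1 = V m + i + 1 by omega]
  push_cast
  rw [show (i : ℚ) + (n.natPred : ℕ) + 1 = i + (n : ℕ) by exact_mod_cast congrArg (i + ·) hn]
  field_simp

theorem sum_add_mul_apply (i : ℕ) (m : ℕ+ →₀ ℕ) :
    ∑ n ∈ m.support, (i + n) * m n = i * degree m + E m := by
  simp only [add_mul, Finset.sum_add_distrib, Finset.mul_sum, degree_apply, E, weight_apply,
    Finsupp.sum, smul_eq_mul, mul_comm]

theorem sum_powCoeff_sub_single (i : ℕ) (m : ℕ+ →₀ ℕ) :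
    ∑ n ∈ m.support, powCoeff (i + n.natPred) (m - single n 1)
      = (i * degree m + E m) * (E m + i - 1)! / ((V m + i + 1)! * P m) := by
  rw [Finset.sum_congr rfl fun n hn => powCoeff_sub_single i (mem_support_iff.1 hn),
    ← Finset.sum_div, ← Finset.sum_mul]
  exact_mod_cast congrArg (fun k : ℕ => (k * (E m + i - 1)! : ℚ) / ((V m + i + 1)! * P m))
    (sum_add_mul_apply i m)

theorem powCoeff_zero_eq_sum {m : ℕ+ →₀ ℕ} (hm : m ≠ 0) :
    powCoeff 0 m = ∑ n ∈ m.support, powCoeff n.natPred (m - single n 1) := by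
  obtain ⟨n, hn⟩ := support_nonempty_iff.2 hm
  have hE := le_E (mem_support_iff.1 hn)
  have h := sum_powCoeff_sub_single 0 m
  simp only [zero_add, add_zero, Nat.cast_zero, zero_mul] at h
  rw [h, powCoeff_zero, ← Nat.mul_factorial_pred (n.pos.trans_le hE).ne', Nat.cast_mul]

theorem powCoeff_succ (j : ℕ) (m : ℕ+ →₀ ℕ) :
    powCoeff (j + 1) m
      = powCoeff j m + ∑ n ∈ m.support, powCoeff (j + 1 + n.natPred) (m - single n 1) := by
  have hP : (P m : ℚ) ≠ 0 := by have := P_pos m; positivity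
  rw [sum_powCoeff_sub_single, powCoeff, powCoeff, show E m + (j + 1) - 1 = E m + j by omega,
    show E m + (j + 1) = E m + j + 1 by omega, show V m + (j + 1) + 1 = V m + j + 1 + 1 by omega,
    Nat.factorial_succ (E m + j), Nat.factorial_succ (V m + j + 1), E_eq_V_add_degree]
  push_cast
  field_simp
  ring

theorem hyperCatalan_cast_of_eq_intCast {m : ℕ+ →₀ ℕ} {z : ℤ}
    (hz : (z : ℚ) = powCoeff 0 m) :
    (hyperCatalan m : ℚ) = powCoeff 0 m := by
  have hden : (((V m + 1)! * P m : ℕ) : ℚ) ≠ 0 := by have := P_pos m; positivity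
  rw [powCoeff_zero, eq_div_iff (by exact_mod_cast hden)] at hz
  have hdvd : (V m + 1)! * P m ∣ (E m)! :=
    Int.natCast_dvd_natCast.1 ⟨z, by rw [mul_comm]; exact_mod_cast hz.symm⟩
  rw [hyperCatalan_eq, add_comm 1, Nat.cast_div hdvd hden, powCoeff_zero, Nat.cast_mul]

variable {S : MvPowerSeries ℕ+ ℤ}

theorem coeff_zero_eq_one (hS : ∀ m, coeff m S = hyperCatalan m) : coeff 0 S = 1 := by
  rw [hS, hyperCatalan_eq]
  simp [E, V, P]

theorem coeff_zero_pow (hS : ∀ m, coeff m S = hyperCatalan m) (j : ℕ) :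
    coeff 0 (S ^ j) = 1 := by
  rw [coeff_zero_eq_constantCoeff_apply, map_pow, ← coeff_zero_eq_constantCoeff_apply,
    coeff_zero_eq_one hS, one_pow]

theorem coeff_X_mul_pow_eq_powCoeff {m : ℕ+ →₀ ℕ} {n : ℕ+} (hn : m n ≠ 0) (i : ℕ)
    (h : ∀ j, ((coeff (m - single n 1) (S ^ (j + 1)) : ℤ) : ℚ)
      = powCoeff j (m - single n 1)) :
    ((coeff m (X n * S ^ (i + n : ℕ)) : ℤ) : ℚ)
      = powCoeff (i + n.natPred) (m - single n 1) := by
  rw [coeff_X_mul_of_apply_ne_zero hn, ← PNat.natPred_add_one n, ← add_assoc, h]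

theorem sum_coeff_X_mul_pow_eq_powCoeff_zero {m : ℕ+ →₀ ℕ} (hm : m ≠ 0)
    (ih : ∀ a < m, ∀ j, ((coeff a (S ^ (j + 1)) : ℤ) : ℚ) = powCoeff j a) :
    ((∑ n ∈ m.support, coeff m (X n * S ^ (n : ℕ)) : ℤ) : ℚ) = powCoeff 0 m := by
  rw [powCoeff_zero_eq_sum hm, Int.cast_sum]
  refine Finset.sum_congr rfl fun n hn => ?_
  have hn := mem_support_iff.1 hn
  simpa using coeff_X_mul_pow_eq_powCoeff hn 0 (ih _ (sub_single_one_lt hn))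

theorem coeff_eq_sum_coeff_X_mul_pow (hS : ∀ m, coeff m S = hyperCatalan m) {m : ℕ+ →₀ ℕ}
    (hm : m ≠ 0) (ih : ∀ a < m, ∀ j, ((coeff a (S ^ (j + 1)) : ℤ) : ℚ) = powCoeff j a) :
    coeff m S = ∑ n ∈ m.support, coeff m (X n * S ^ (n : ℕ)) := by
  have h := sum_coeff_X_mul_pow_eq_powCoeff_zero hm ih
  rw [← hyperCatalan_cast_of_eq_intCast h, ← Int.cast_natCast, ← hS] at h
  exact_mod_cast h.symm

theorem coeff_pow_succ (hS : ∀ m, coeff m S = hyperCatalan m) (m : ℕ+ →₀ ℕ) (j : ℕ) :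
    ((coeff m (S ^ (j + 1)) : ℤ) : ℚ) = powCoeff j m := by
  induction m using WellFoundedLT.induction generalizing j with
  | _ m ih =>
  by_cases hm : m = 0
  · rw [hm, coeff_zero_pow hS, powCoeff_zero_right, Int.cast_one]
  have hFE := coeff_eq_sum_coeff_X_mul_pow hS hm ih
  induction j with
  | zero => rw [zero_add, pow_one, hFE, sum_coeff_X_mul_pow_eq_powCoeff_zero hm ih]
  | succ j ihj =>
    have hFE_le : ∀ a ≤ m, a ≠ 0 →
        coeff a S = ∑ n ∈ a.support, coeff a (X n * S ^ (n : ℕ)) :=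
      fun a ha ha₀ => coeff_eq_sum_coeff_X_mul_pow hS ha₀ fun b hb => ih b (hb.trans_le ha)
    rw [pow_succ', coeff_mul_of_coeff_eq_sum_coeff_X_mul (coeff_zero_eq_one hS) hFE_le,
      Int.cast_add, ihj, Int.cast_sum, powCoeff_succ]
    congr 1
    refine Finset.sum_congr rfl fun n hn => ?_
    have hn := mem_support_iff.1 hn
    rw [mul_assoc, ← pow_add, add_comm]
    exact coeff_X_mul_pow_eq_powCoeff hn (j + 1) (ih _ (sub_single_one_lt hn))

end HyperCatalan

/-- the hyper-Catalan power series `S` satisfies the functional equation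
`S = 1 + Σ_{n ≥ 1} Xₙ·Sⁿ`, coefficientwise. -/
theorem hyperCatalan_series_functional_equation (S : MvPowerSeries ℕ+ ℤ)
    (hS : ∀ m : ℕ+ →₀ ℕ, MvPowerSeries.coeff m S = hyperCatalan m) :
    (∀ m : ℕ+ →₀ ℕ, m ≠ 0 →
        MvPowerSeries.coeff m S
          = ∑ᶠ n : ℕ+, MvPowerSeries.coeff m (MvPowerSeries.X n * S ^ (n : ℕ))) ∧
      MvPowerSeries.coeff 0 S = 1 := by
  refine ⟨fun m hm => ?_, HyperCatalan.coeff_zero_eq_one hS⟩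
  rw [finsum_eq_sum_of_support_subset _ (MvPowerSeries.support_coeff_X_mul_subset m _)]
  exact HyperCatalan.coeff_eq_sum_coeff_X_mul_pow hS hm fun a _ =>
    HyperCatalan.coeff_pow_succ hS a
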